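/- (Many Absorbers) For every α > 0 with 1/α ∈ ℕ there exist ϑ > 0 and n₀ ∈ ℕ such that for all n ≥ n₀ the following holds, where s = 2/α. If H = ([n], E) is a 3-graph with d(i,j) ≥ min(i, j, n/2) + αn for all pairs {i,j} of distinct vertices, and R ⊆ [n] is any set with |R| ≤ ϑ²n, then for every vertex x ∈ [n] the number of (x,α)-absorbers all of whose entries lie in [n] \ R is at least (αn/3)^{4s}. -/

import Mathlib

/-- `E` is the edge set of a 3-uniform hypergraph on vertex set `[n] = {1, …, n}`. -/
def IsThreeGraph (n : ℕ) (E : Finset (Finset ℕ)) : Prop :=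
  ∀ e ∈ E, e.card = 3 ∧ e ⊆ Finset.Icc 1 n

/-- The pair degree `d(i,j)`: the number of vertices `x` with `{i,j,x} ∈ E`. -/
def pairDeg (n : ℕ) (E : Finset (Finset ℕ)) (i j : ℕ) : ℕ :=
  ((Finset.Icc 1 n).filter fun x => ({i, j, x} : Finset ℕ) ∈ E).card

/-- The degree condition `d(i,j) ≥ min(i, j, n/2) + αn` for all distinct `i, j ∈ [n]`. -/
def DegCond (n : ℕ) (E : Finset (Finset ℕ)) (α : ℝ) : Prop :=
  ∀ i ∈ Finset.Icc 1 n, ∀ j ∈ Finset.Icc 1 n, i ≠ j →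
    min (min (i : ℝ) (j : ℝ)) ((n : ℝ) / 2) + α * n ≤ (pairDeg n E i j : ℝ)

/-- `f` lists the `ℓ + 2` vertices of a tight path of length `ℓ` in the 3-graph
`([n], E)`: the vertices are distinct, lie in `[n]`, and every three consecutive
vertices form an edge. -/
def IsTightPathOn (n : ℕ) (E : Finset (Finset ℕ)) (ℓ : ℕ) (f : Fin (ℓ + 2) → ℕ) : Prop :=
  Function.Injective f ∧ (∀ i, f i ∈ Finset.Icc 1 n) ∧
  ∀ i : ℕ, ∀ h : i < ℓ,
    ({f ⟨i, by omega⟩, f ⟨i + 1, by omega⟩, f ⟨i + 2, by omega⟩} : Finset ℕ) ∈ E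


/-- `(v₁,w₁,y₁,z₁,…,v_s,w_s,y_s,z_s)` (given by the four functions `v w y z`) is an
`(x,α)`-absorber: a `4s`-tuple of distinct vertices of `[n]`, none equal to `x`,
such that `v₁w₁xy₁z₁` is a tight path, `v_iw_iy_{i+1}z_{i+1}` and
`v_{i+1}w_{i+1}y_iz_i` are tight paths for all `i ∈ [s−1]`, and `v_sw_sy_sz_s` is a
tight path (distinctness of the vertices of these short paths follows from the
distinctness of the tuple, so only the edge conditions are recorded). -/
def IsAbsorber (n : ℕ) (E : Finset (Finset ℕ)) (s : ℕ) (x : ℕ)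
    (v w y z : Fin s → ℕ) : Prop :=
  Function.Injective (fun p : Fin 4 × Fin s => ![v, w, y, z] p.1 p.2) ∧
  (∀ i, v i ∈ Finset.Icc 1 n ∧ w i ∈ Finset.Icc 1 n ∧ y i ∈ Finset.Icc 1 n ∧
    z i ∈ Finset.Icc 1 n) ∧
  (∀ i, v i ≠ x ∧ w i ≠ x ∧ y i ≠ x ∧ z i ≠ x) ∧
  (∀ h : 0 < s,
    ({v ⟨0, h⟩, w ⟨0, h⟩, x} : Finset ℕ) ∈ E ∧
    ({w ⟨0, h⟩, x, y ⟨0, h⟩} : Finset ℕ) ∈ E ∧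
    ({x, y ⟨0, h⟩, z ⟨0, h⟩} : Finset ℕ) ∈ E ∧
    ({v ⟨s - 1, by omega⟩, w ⟨s - 1, by omega⟩, y ⟨s - 1, by omega⟩} : Finset ℕ) ∈ E ∧
    ({w ⟨s - 1, by omega⟩, y ⟨s - 1, by omega⟩, z ⟨s - 1, by omega⟩} : Finset ℕ) ∈ E) ∧
  (∀ i : ℕ, ∀ h : i + 1 < s,
    ({v ⟨i, by omega⟩, w ⟨i, by omega⟩, y ⟨i + 1, h⟩} : Finset ℕ) ∈ E ∧
    ({w ⟨i, by omega⟩, y ⟨i + 1, h⟩, z ⟨i + 1, h⟩} : Finset ℕ) ∈ E ∧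
    ({v ⟨i + 1, h⟩, w ⟨i + 1, h⟩, y ⟨i, by omega⟩} : Finset ℕ) ∈ E ∧
    ({w ⟨i + 1, h⟩, y ⟨i, by omega⟩, z ⟨i, by omega⟩} : Finset ℕ) ∈ E)

/-!
The absorber is chosen greedily as a sequence of `8k` vertices, block `j` listing
`w_j, y_j, v_j, z_j` in this order. Each vertex is taken from the common neighbourhood of two
vertices chosen before it (or of one of them and `x`), so every edge the absorber needs is
present once its last vertex is chosen.

The degree condition `d(a,b) ≥ min(a,b,n/2) + n/k` only helps for large `a, b`, so the
vertices of block `j` are required to exceed `t_j = min(j⌊n/(2k)⌋, ⌊n/2⌋)`. Two vertices above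
`t_{j-1}` have more than `t_{j-1} + n/k ≥ t_j + n/(2k)` common neighbours, at least `n/(2k)` of
them above `t_j`. From block `2k-2` on every vertex exceeds `n/2`, so the two neighbourhoods
that `v_s` (and likewise `z_s`) must lie in both have at least `n/2 + n/k` elements and share
`2n/k`.
Discarding `R`, `x` and the vertices already used leaves `⌈n/(3k)⌉` choices at every step, and
distinct sequences give distinct absorbers. For `k ≤ 2` the degree condition cannot hold:
the pair `{n-1, n}` would need `n` common neighbours.
-/

theorem List.Nodup.getD_inj {α : Type*} {l : List α} (hl : l.Nodup) (d : α) {q q' : ℕ}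
    (hq : q < l.length) (hq' : q' < l.length) (h : l.getD q d = l.getD q' d) : q = q' := by
  rwa [List.getD_eq_getElem _ _ hq, List.getD_eq_getElem _ _ hq', hl.getElem_inj_iff] at h

namespace ManyAbsorbers

open Finset

section SeqChoices

variable {α : Type*} [DecidableEq α]

def seqChoices (A : ℕ → List α → Finset α) : ℕ → Finset (List α)
  | 0 => {[]}
  | T + 1 => (seqChoices A T).biUnion fun l => (A T l).image fun a => l ++ [a]

variable {A : ℕ → List α → Finset α} {T : ℕ} {l : List α}

theorem mem_seqChoices_succ :
    l ∈ seqChoices A (T + 1) ↔ ∃ l' ∈ seqChoices A T, ∃ a ∈ A T l', l' ++ [a] = l := by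
  simp [seqChoices]

theorem length_of_mem_seqChoices (hl : l ∈ seqChoices A T) : l.length = T := by
  induction T generalizing l with
  | zero => simpa [seqChoices] using hl
  | succ T ih =>
    obtain ⟨l', hl', a, -, rfl⟩ := mem_seqChoices_succ.1 hl
    simp [ih hl']

theorem getD_mem_of_mem_seqChoices (d : α) (hl : l ∈ seqChoices A T) {q : ℕ} (hq : q < T) :
    l.getD q d ∈ A q (l.take q) := by
  induction T generalizing l with
  | zero => omega
  | succ T ih =>
    obtain ⟨l', hl', a, ha, rfl⟩ := mem_seqChoices_succ.1 hl
    have hlen := length_of_mem_seqChoices hl'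
    rcases Nat.lt_succ_iff_lt_or_eq.1 hq with hq | rfl
    · rw [List.getD_append _ _ _ _ (by omega), List.take_append_of_le_length (by omega)]
      exact ih hl' hq
    · subst hlen
      simpa using ha

theorem nodup_of_mem_seqChoices (hA : ∀ u l, ∀ a ∈ A u l, a ∉ l)
    (hl : l ∈ seqChoices A T) : l.Nodup := by
  induction T generalizing l with
  | zero => simp_all [seqChoices]
  | succ T ih =>
    obtain ⟨l', hl', a, ha, rfl⟩ := mem_seqChoices_succ.1 hl
    exact List.nodup_append.2 ⟨ih hl', List.nodup_singleton a,
      fun b hb c hc => by rintro rfl; exact hA _ _ _ ha (by simp_all)⟩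

theorem pow_le_card_seqChoices (M : ℕ)
    (hA : ∀ u < T, ∀ l ∈ seqChoices A u, M ≤ #(A u l)) : M ^ T ≤ #(seqChoices A T) := by
  induction T with
  | zero => simp [seqChoices]
  | succ T ih =>
    have hdisj : (seqChoices A T : Set (List α)).PairwiseDisjoint
        fun l => (A T l).image fun a => l ++ [a] := by
      intro l₁ _ l₂ _ hne
      simp only [Function.onFun, disjoint_left, mem_image]
      rintro _ ⟨a, -, rfl⟩ ⟨b, -, hab⟩
      exact hne (List.append_inj' hab (by simp)).1.symm
    rw [seqChoices, card_biUnion hdisj, pow_succ]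
    calc M ^ T * M ≤ #(seqChoices A T) * M :=
          Nat.mul_le_mul_right _ (ih fun u hu => hA u (by omega))
      _ ≤ ∑ l ∈ seqChoices A T, #((A T l).image fun a => l ++ [a]) := by
        rw [← smul_eq_mul]
        refine card_nsmul_le_sum _ _ _ fun l hl => ?_
        rw [card_image_of_injective _ fun a b hab => by simpa using hab]
        exact hA T (by omega) l hl

end SeqChoices

section PairNbhd

variable {n : ℕ} {E : Finset (Finset ℕ)} {α : ℝ} {a b c d : ℕ}

def pairNbhd (n : ℕ) (E : Finset (Finset ℕ)) (a b : ℕ) : Finset ℕ :=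
  (Icc 1 n).filter fun c => ({a, b, c} : Finset ℕ) ∈ E

theorem mem_pairNbhd :
    c ∈ pairNbhd n E a b ↔ c ∈ Icc 1 n ∧ ({a, b, c} : Finset ℕ) ∈ E :=
  mem_filter

theorem pairNbhd_subset : pairNbhd n E a b ⊆ Icc 1 n := filter_subset _ _

theorem le_card_pairNbhd (hdeg : DegCond n E α) (ha : a ∈ Icc 1 n) (hb : b ∈ Icc 1 n)
    (hab : a ≠ b) : min (min (a : ℝ) b) (n / 2) + α * n ≤ #(pairNbhd n E a b) :=
  hdeg a ha b hb hab

theorem min_min_half_eq_half (ha : n ≤ 2 * a) (hb : n ≤ 2 * b) :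
    min (min (a : ℝ) b) (n / 2) = n / 2 := by
  have ha : (n : ℝ) ≤ 2 * a := by exact_mod_cast ha
  have hb : (n : ℝ) ≤ 2 * b := by exact_mod_cast hb
  exact min_eq_right (le_min (by linarith) (by linarith))

theorem card_pairNbhd_le_sub_two (hE : IsThreeGraph n E) (ha : a ∈ Icc 1 n)
    (hb : b ∈ Icc 1 n) (hab : a ≠ b) :
    #(pairNbhd n E a b) ≤ n - 2 := by
  have hsub : pairNbhd n E a b ⊆ ((Icc 1 n).erase a).erase b := by
    intro c hc
    obtain ⟨hcn, hcE⟩ := mem_pairNbhd.1 hc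
    have h3 := (hE _ hcE).1
    refine mem_erase.2 ⟨?_, mem_erase.2 ⟨?_, hcn⟩⟩ <;> rintro rfl
    · have := card_le_two (a := a) (b := c)
      simp_all
    · have : ({c, b, c} : Finset ℕ) = {b, c} := by ext; simp
      have := card_le_two (a := b) (b := c)
      simp_all
  have h := card_le_card hsub
  rwa [card_erase_of_mem (mem_erase.2 ⟨hab.symm, hb⟩), card_erase_of_mem ha, Nat.card_Icc,
    Nat.add_sub_cancel, Nat.sub_sub] at h

theorem lt_half_of_degCond (hE : IsThreeGraph n E) (hdeg : DegCond n E α) (hn : 4 ≤ n) :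
    α < 1 / 2 := by
  have hn1 : n - 1 ∈ Icc 1 n := mem_Icc.2 ⟨by omega, by omega⟩
  have hn2 : n ∈ Icc 1 n := mem_Icc.2 ⟨by omega, le_rfl⟩
  have hlow := le_card_pairNbhd hdeg hn1 hn2 (by omega)
  have hup : (#(pairNbhd n E (n - 1) n) : ℝ) ≤ n - 2 := by
    have := card_pairNbhd_le_sub_two hE hn1 hn2 (by omega)
    have h2 : ((n - 2 : ℕ) : ℝ) = n - 2 := by rw [Nat.cast_sub (by omega)]; rfl
    exact h2 ▸ Nat.cast_le.2 this
  rw [min_min_half_eq_half (by omega) (by omega)] at hlow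
  nlinarith

theorem filter_pos_eq_self {X : Finset ℕ} (hX : X ⊆ Icc 1 n) : X.filter (0 < ·) = X :=
  filter_true_of_mem fun _ ha => (mem_Icc.1 (hX ha)).1

theorem card_le_card_filter_lt_add {X : Finset ℕ} (hX : 0 ∉ X) (t : ℕ) :
    #X ≤ #(X.filter (t < ·)) + t := by
  have hlow : X.filter (¬ t < ·) ⊆ Icc 1 t := by
    intro a ha
    obtain ⟨haX, hat⟩ := mem_filter.1 ha
    have : a ≠ 0 := by rintro rfl; exact hX haX
    simp only [mem_Icc]; omega
  have := card_le_card hlow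
  rw [Nat.card_Icc] at this
  have := card_filter_add_card_filter_not (s := X) (fun a => t < a)
  omega

theorem le_card_filter_pairNbhd (hdeg : DegCond n E α) (ha : a ∈ Icc 1 n)
    (hb : b ∈ Icc 1 n) (hab : a ≠ b) {t : ℕ} (hta : t < a) (htb : t < b) (htn : 2 * t ≤ n)
    (t' : ℕ) : α * n + t - t' ≤ #((pairNbhd n E a b).filter (t' < ·)) := by
  have hmin : (t : ℝ) ≤ min (min (a : ℝ) b) (n / 2) := by
    have h1 : (t : ℝ) + 1 ≤ a := by exact_mod_cast hta
    have h2 : (t : ℝ) + 1 ≤ b := by exact_mod_cast htb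
    have h3 : 2 * (t : ℝ) ≤ n := by exact_mod_cast htn
    refine le_min (le_min ?_ ?_) ?_ <;> linarith
  have hfilter : (#(pairNbhd n E a b) : ℝ) ≤ #((pairNbhd n E a b).filter (t' < ·)) + t' := by
    exact_mod_cast card_le_card_filter_lt_add
      (fun h => by simpa using pairNbhd_subset h) t'
  linarith [le_card_pairNbhd hdeg ha hb hab]

theorem le_card_inter_pairNbhd (hdeg : DegCond n E α) (ha : a ∈ Icc 1 n)
    (hb : b ∈ Icc 1 n) (hc : c ∈ Icc 1 n) (hd : d ∈ Icc 1 n) (hab : a ≠ b) (hcd : c ≠ d)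
    (hna : n ≤ 2 * a) (hnb : n ≤ 2 * b) (hnc : n ≤ 2 * c) (hnd : n ≤ 2 * d) :
    2 * α * n ≤ #(pairNbhd n E a b ∩ pairNbhd n E c d) := by
  have hab' := le_card_pairNbhd hdeg ha hb hab
  have hcd' := le_card_pairNbhd hdeg hc hd hcd
  rw [min_min_half_eq_half hna hnb] at hab'
  rw [min_min_half_eq_half hnc hnd] at hcd'
  have hunion : #(pairNbhd n E a b ∪ pairNbhd n E c d) ≤ n := by
    simpa using card_le_card (union_subset (pairNbhd_subset (a := a) (b := b)) pairNbhd_subset)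
  have := card_union_add_card_inter (pairNbhd n E a b) (pairNbhd n E c d)
  have : (#(pairNbhd n E a b) : ℝ) + #(pairNbhd n E c d) ≤
      #(pairNbhd n E a b ∩ pairNbhd n E c d) + n := by exact_mod_cast (by omega)
  linarith

end PairNbhd

section Thresholds

variable {n k j : ℕ}

def thr (n k j : ℕ) : ℕ := min (j * (n / (2 * k))) (n / 2)

theorem thr_zero : thr n k 0 = 0 := by simp [thr]

theorem thr_mono : Monotone (thr n k) :=
  fun _ _ h => min_le_min_right _ (Nat.mul_le_mul_right _ h)

theorem two_mul_thr_le : 2 * thr n k j ≤ n := by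
  have := min_le_right (j * (n / (2 * k))) (n / 2)
  unfold thr; omega

theorem thr_le_thr_pred_add : (thr n k j : ℝ) ≤ thr n k (j - 1) + n / (2 * k) := by
  have hnat : thr n k j ≤ thr n k (j - 1) + n / (2 * k) := by
    rcases j with _ | j
    · simp [thr_zero]
    · show min ((j + 1) * _) _ ≤ min (j * _) _ + _
      generalize n / (2 * k) = q
      rw [Nat.add_one_mul]
      omega
  calc (thr n k j : ℝ) ≤ ((thr n k (j - 1) + n / (2 * k) : ℕ) : ℝ) := by exact_mod_cast hnat
    _ ≤ thr n k (j - 1) + n / (2 * k) := by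
      push_cast
      gcongr
      exact_mod_cast Nat.cast_div_le

theorem thr_eq_half (hk : 3 ≤ k) (hn : 2 * k ^ 2 ≤ n) (hj : 2 * k - 2 ≤ j) :
    thr n k j = n / 2 := by
  unfold thr
  set q := n / (2 * k)
  have hdiv : 2 * k * q + n % (2 * k) = n := Nat.div_add_mod n (2 * k)
  have hmod : n % (2 * k) < 2 * k := Nat.mod_lt _ (by omega)
  have hkq : k ≤ q := (Nat.le_div_iff_mul_le (by omega)).2 (by nlinarith)
  have h3q : 3 * q ≤ k * q := Nat.mul_le_mul_right q hk
  have hjq : (2 * k - 2) * q ≤ j * q := Nat.mul_le_mul_right q hj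
  have hsplit : (2 * k - 2) * q + 2 * q = 2 * k * q := by
    rw [← Nat.add_mul]; congr 1; omega
  have : 2 * k * q = 2 * (k * q) := Nat.mul_assoc 2 k q
  omega

end Thresholds

section Schedule

/-- Position `4 * j + r` of the sequence carries `w_j, y_j, v_j, z_j` for `r = 0, 1, 2, 3`. Its
vertex is drawn from the common neighbourhood of the two vertices named by `linkPair j r`, where
`none` names `x` and `some q` the vertex at position `q`. -/
def linkPair : ℕ → ℕ → Option ℕ × Option ℕ
  | 0, 0 => (none, none)
  | 0, 1 => (some 0, none)
  | 0, 2 => (some 0, none)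
  | 0, _ => (none, some 1)
  | j + 1, 0 => (some (4 * j + 1), some (4 * j + 3))
  | j + 1, 1 => (some (4 * j + 2), some (4 * j))
  | j + 1, 2 => (some (4 * (j + 1)), some (4 * j + 1))
  | j + 1, _ => (some (4 * j), some (4 * (j + 1) + 1))

/-- The bound `q < 4 * j + 2` keeps `q` off the positions of `v_j, z_j`, which in the last block
carry no threshold. -/
def IsEarlier (j r : ℕ) : Option ℕ → Prop
  | none => j = 0
  | some q => q < 4 * j + r ∧ q < 4 * j + 2 ∧ j ≤ q / 4 + 1

theorem linkPair_spec {j r : ℕ} (hr : r < 4) (h0 : 0 < 4 * j + r) :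
    (linkPair j r).1 ≠ (linkPair j r).2 ∧ IsEarlier j r (linkPair j r).1 ∧
      IsEarlier j r (linkPair j r).2 := by
  rcases j with _ | j <;> interval_cases r <;> simp [linkPair, IsEarlier] <;> omega

def vtx (x : ℕ) (l : List ℕ) (p : Option ℕ) : ℕ := p.elim x (l.getD · 0)

theorem vtx_take {x j r u : ℕ} {l : List ℕ} {p : Option ℕ} (hp : IsEarlier j r p)
    (hu : 4 * j + r ≤ u) : vtx x (l.take u) p = vtx x l p := by
  cases p with
  | none => rfl
  | some q => simp [vtx, List.getD_eq_getElem?_getD, show q < u by grind [IsEarlier]]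

end Schedule

section Construction

variable {n k : ℕ} {E : Finset (Finset ℕ)} {R : Finset ℕ} {x u T q j r : ℕ} {l : List ℕ}

/-- `w_0` is unconstrained, and in the last block `v` and `z` must in addition close the path
`v_s w_s y_s z_s`. -/
def candidates (n k : ℕ) (E : Finset (Finset ℕ)) (x u : ℕ) (l : List ℕ) : Finset ℕ :=
  if u = 0 then Icc 1 n
  else
    let N := pairNbhd n E (vtx x l (linkPair (u / 4) (u % 4)).1)
      (vtx x l (linkPair (u / 4) (u % 4)).2)
    if 4 * (2 * k - 1) + 2 ≤ u then
      N ∩ pairNbhd n E (l.getD (4 * (2 * k - 1)) 0) (l.getD (4 * (2 * k - 1) + 1) 0)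
    else N

def posThr (n k u : ℕ) : ℕ := if 4 * (2 * k - 1) + 2 ≤ u then 0 else thr n k (u / 4)

def freshCandidates (n k : ℕ) (E : Finset (Finset ℕ)) (R : Finset ℕ) (x u : ℕ)
    (l : List ℕ) : Finset ℕ :=
  (candidates n k E x u l).filter (posThr n k u < ·) \ insert x (R ∪ l.toFinset)

theorem candidates_subset : candidates n k E x u l ⊆ Icc 1 n := by
  unfold candidates
  split_ifs
  exacts [subset_rfl, inter_subset_left.trans pairNbhd_subset, pairNbhd_subset]

theorem candidates_take : candidates n k E x u (l.take u) = candidates n k E x u l := by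
  unfold candidates
  split_ifs with h0 htop
  · rfl
  all_goals
    obtain ⟨-, h₁, h₂⟩ := linkPair_spec (j := u / 4) (Nat.mod_lt u (by norm_num)) (by omega)
    have hu : 4 * (u / 4) + u % 4 ≤ u := by omega
    simp only [vtx_take h₁ hu, vtx_take h₂ hu]
  simp [List.getD_eq_getElem?_getD, show 4 * (2 * k - 1) < u by omega,
    show 4 * (2 * k - 1) + 1 < u by omega]

theorem getD_spec (hl : l ∈ seqChoices (freshCandidates n k E R x) T) (hq : q < T) :
    l.getD q 0 ∈ candidates n k E x q l ∧ posThr n k q < l.getD q 0 ∧ l.getD q 0 ∉ R ∧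
      l.getD q 0 ≠ x := by
  have h := getD_mem_of_mem_seqChoices 0 hl hq
  simp only [freshCandidates, candidates_take, mem_sdiff, mem_filter, mem_insert, mem_union] at h
  tauto

theorem nodup_of_mem (hl : l ∈ seqChoices (freshCandidates n k E R x) T) : l.Nodup :=
  nodup_of_mem_seqChoices (fun _ _ _ ha => by simp_all [freshCandidates]) hl

theorem getD_inj (hl : l ∈ seqChoices (freshCandidates n k E R x) T) {q' : ℕ} (hq : q < T)
    (hq' : q' < T) (h : l.getD q 0 = l.getD q' 0) : q = q' := by
  have hlen := length_of_mem_seqChoices hl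
  exact (nodup_of_mem hl).getD_inj 0 (by omega) (by omega) h

theorem vtx_spec (hx : x ∈ Icc 1 n)
    (hl : l ∈ seqChoices (freshCandidates n k E R x) (4 * j + r)) (hj : j < 2 * k)
    {p : Option ℕ} (hp : IsEarlier j r p) :
    vtx x l p ∈ Icc 1 n ∧ thr n k (j - 1) < vtx x l p := by
  cases p with
  | none =>
    obtain rfl : j = 0 := hp
    have : 0 < x := (mem_Icc.1 hx).1
    exact ⟨hx, by simpa [thr_zero, vtx]⟩
  | some q =>
    obtain ⟨hqu, hq2, hjq⟩ := hp
    obtain ⟨hcand, hthr, -⟩ := getD_spec hl hqu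
    have hpos : posThr n k q = thr n k (q / 4) := if_neg (by omega)
    exact ⟨candidates_subset hcand,
      (thr_mono (show j - 1 ≤ q / 4 by omega)).trans_lt (hpos ▸ hthr)⟩

theorem vtx_ne_vtx (hl : l ∈ seqChoices (freshCandidates n k E R x) (4 * j + r))
    {p p' : Option ℕ} (hp : IsEarlier j r p) (hp' : IsEarlier j r p') (hne : p ≠ p') :
    vtx x l p ≠ vtx x l p' := by
  cases p with
  | none =>
    cases p' with
    | none => exact absurd rfl hne
    | some q' => exact (getD_spec hl hp'.1).2.2.2.symm
  | some q =>
    cases p' with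
    | none => exact (getD_spec hl hp.1).2.2.2
    | some q' => exact fun h => hne (congrArg some (getD_inj hl hp.1 hp'.1 h))

theorem top_vertex_spec (hk : 3 ≤ k) (hn : 2 * k ^ 2 ≤ n)
    (hl : l ∈ seqChoices (freshCandidates n k E R x) T) (hq₁ : 4 * (2 * k - 1) ≤ q)
    (hq₂ : q < 4 * (2 * k - 1) + 2) (hqT : q < T) :
    l.getD q 0 ∈ Icc 1 n ∧ n ≤ 2 * l.getD q 0 := by
  obtain ⟨hcand, hthr, -⟩ := getD_spec hl hqT
  rw [posThr, if_neg (by omega), thr_eq_half hk hn (by omega)] at hthr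
  exact ⟨candidates_subset hcand, by omega⟩

end Construction

section Counting

variable {n k : ℕ} {E : Finset (Finset ℕ)} {R : Finset ℕ} {x u : ℕ} {l : List ℕ}

theorem le_card_filter_candidates (hk : 3 ≤ k) (hn : 2 * k ^ 2 ≤ n) (hdeg : DegCond n E (1 / k))
    (hx : x ∈ Icc 1 n) (hu : u < 8 * k) (hl : l ∈ seqChoices (freshCandidates n k E R x) u) :
    (n : ℝ) / (2 * k) ≤ #((candidates n k E x u l).filter (posThr n k u < ·)) := by
  have hαn : 1 / (k : ℝ) * n = n / (2 * k) + n / (2 * k) := by field_simp; ring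
  obtain ⟨j, r, hr, rfl⟩ : ∃ j r, r < 4 ∧ u = 4 * j + r :=
    ⟨u / 4, u % 4, Nat.mod_lt _ (by norm_num), (Nat.div_add_mod u 4).symm⟩
  rcases Nat.eq_zero_or_pos (4 * j + r) with h0 | h0
  · simp only [candidates, posThr, h0, if_true, Nat.zero_div, thr_zero, ite_self,
      filter_pos_eq_self subset_rfl, Nat.card_Icc, Nat.add_sub_cancel]
    exact div_le_self (Nat.cast_nonneg n) (by norm_cast; omega)
  have hj : j < 2 * k := by omega
  obtain ⟨hne, hp₁, hp₂⟩ := linkPair_spec hr h0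
  obtain ⟨ha, hta⟩ := vtx_spec hx hl hj hp₁
  obtain ⟨hb, htb⟩ := vtx_spec hx hl hj hp₂
  have hab := vtx_ne_vtx hl hp₁ hp₂ hne
  simp only [candidates, posThr, if_neg h0.ne', show (4 * j + r) / 4 = j by omega,
    show (4 * j + r) % 4 = r by omega]
  split_ifs with htop
  · obtain ⟨hc, hnc⟩ := top_vertex_spec hk hn hl le_rfl (by omega) (by omega)
    obtain ⟨hd, hnd⟩ := top_vertex_spec hk hn hl (q := 4 * (2 * k - 1) + 1) (by omega)
      (by omega) (by omega)
    have hcd : l.getD (4 * (2 * k - 1)) 0 ≠ l.getD (4 * (2 * k - 1) + 1) 0 :=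
      fun h => absurd (getD_inj hl (by omega) (by omega) h) (by omega)
    have hhalf : thr n k (j - 1) = n / 2 := thr_eq_half hk hn (by omega)
    have := le_card_inter_pairNbhd hdeg ha hb hc hd hab hcd (by omega) (by omega) hnc hnd
    rw [filter_pos_eq_self (inter_subset_left.trans pairNbhd_subset)]
    linarith
  · have := le_card_filter_pairNbhd hdeg ha hb hab hta htb two_mul_thr_le (thr n k j)
    have := thr_le_thr_pred_add (n := n) (k := k) (j := j)
    linarith

theorem third_add_slack_le_half (hk : 3 ≤ k) (hn : 120 * k ^ 2 ≤ n) :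
    (n : ℝ) / (3 * k) + 1 + (n / (16 * k ^ 2) + 8 * k) ≤ n / (2 * k) := by
  have hk' : (3 : ℝ) ≤ k := by exact_mod_cast hk
  have hn' : 120 * (k : ℝ) ^ 2 ≤ n := by exact_mod_cast hn
  have hsq : (n : ℝ) / (16 * k ^ 2) ≤ n / (48 * k) :=
    div_le_div_of_nonneg_left (by positivity) (by positivity) (by nlinarith)
  have hlin : 8 * (k : ℝ) + 1 ≤ 7 * (n / (48 * k)) := by
    rw [mul_div_assoc', le_div_iff₀ (by positivity)]
    nlinarith
  have : (n : ℝ) / (2 * k) = n / (3 * k) + 8 * (n / (48 * k)) := by field_simp; ring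
  linarith

theorem ceil_le_card_freshCandidates (hk : 3 ≤ k) (hn : 120 * k ^ 2 ≤ n)
    (hdeg : DegCond n E (1 / k)) (hR : (#R : ℝ) ≤ n / (16 * k ^ 2)) (hx : x ∈ Icc 1 n)
    (hu : u < 8 * k) (hl : l ∈ seqChoices (freshCandidates n k E R x) u) :
    ⌈(n : ℝ) / (3 * k)⌉₊ ≤ #(freshCandidates n k E R x u l) := by
  have hexcl : #(insert x (R ∪ l.toFinset)) ≤ #R + u + 1 := by
    have := l.toFinset_card_le
    have := card_union_le R l.toFinset
    have := card_insert_le x (R ∪ l.toFinset)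
    have := length_of_mem_seqChoices hl
    omega
  have hsplit : (#((candidates n k E x u l).filter (posThr n k u < ·)) : ℝ) ≤
      #(freshCandidates n k E R x u l) + (#R + u + 1) := by
    exact_mod_cast card_le_card_sdiff_add_card.trans (Nat.add_le_add_left hexcl _)
  have hceil := Nat.ceil_lt_add_one (by positivity : (0 : ℝ) ≤ n / (3 * k))
  have hu' : (u : ℝ) + 1 ≤ 8 * k := by exact_mod_cast hu
  have := le_card_filter_candidates hk (by omega) hdeg hx hu hl
  have := third_add_slack_le_half hk hn
  exact_mod_cast
    (by linarith : (⌈(n : ℝ) / (3 * k)⌉₊ : ℝ) ≤ #(freshCandidates n k E R x u l))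

end Counting

section Absorbers

variable {n k T : ℕ} {E : Finset (Finset ℕ)} {R : Finset ℕ} {x : ℕ} {l : List ℕ}

theorem triple_rotate {β : Type*} [DecidableEq β] (a b c : β) :
    ({a, b, c} : Finset β) = {b, c, a} := by
  ext; simp; tauto

theorem linkPair_triple_mem (hl : l ∈ seqChoices (freshCandidates n k E R x) T) {j r : ℕ}
    (hr : r < 4) (h0 : 0 < 4 * j + r) (hu : 4 * j + r < T) :
    ({vtx x l (linkPair j r).1, vtx x l (linkPair j r).2, l.getD (4 * j + r) 0} :
      Finset ℕ) ∈ E := by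
  have h := (getD_spec hl hu).1
  simp only [candidates, if_neg h0.ne', show (4 * j + r) / 4 = j by omega,
    show (4 * j + r) % 4 = r by omega] at h
  split_ifs at h
  exacts [(mem_pairNbhd.1 (mem_inter.1 h).1).2, (mem_pairNbhd.1 h).2]

theorem top_triple_mem (hl : l ∈ seqChoices (freshCandidates n k E R x) (8 * k)) (hk : 1 ≤ k)
    {r : ℕ} (hr : 2 ≤ r) (hr4 : r < 4) :
    ({l.getD (4 * (2 * k - 1)) 0, l.getD (4 * (2 * k - 1) + 1) 0,
      l.getD (4 * (2 * k - 1) + r) 0} : Finset ℕ) ∈ E := by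
  have h := (getD_spec hl (q := 4 * (2 * k - 1) + r) (by omega)).1
  simp only [candidates, if_neg (show 4 * (2 * k - 1) + r ≠ 0 by omega),
    if_pos (show 4 * (2 * k - 1) + 2 ≤ 4 * (2 * k - 1) + r by omega)] at h
  exact (mem_pairNbhd.1 (mem_inter.1 h).2).2

def toAbsorber (s : ℕ) (l : List ℕ) :
    (Fin s → ℕ) × (Fin s → ℕ) × (Fin s → ℕ) × (Fin s → ℕ) :=
  (fun i => l.getD (4 * i + 2) 0, fun i => l.getD (4 * i) 0, fun i => l.getD (4 * i + 1) 0,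
    fun i => l.getD (4 * i + 3) 0)

def absorberSet (n : ℕ) (E : Finset (Finset ℕ)) (s x : ℕ) (R : Finset ℕ) :
    Set ((Fin s → ℕ) × (Fin s → ℕ) × (Fin s → ℕ) × (Fin s → ℕ)) :=
  {p | IsAbsorber n E s x p.1 p.2.1 p.2.2.1 p.2.2.2 ∧
    ∀ i, p.1 i ∉ R ∧ p.2.1 i ∉ R ∧ p.2.2.1 i ∉ R ∧ p.2.2.2 i ∉ R}

theorem injective_entries_toAbsorber {s : ℕ} {l : List ℕ} (hl : l.Nodup)
    (hs : 4 * s ≤ l.length) :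
    Function.Injective fun p : Fin 4 × Fin s => ![(toAbsorber s l).1, (toAbsorber s l).2.1,
      (toAbsorber s l).2.2.1, (toAbsorber s l).2.2.2] p.1 p.2 := by
  rintro ⟨a, i⟩ ⟨b, i'⟩ h
  have hσ : ∀ c : Fin 4, (![2, 0, 1, 3] : Fin 4 → ℕ) c < 4 := by decide
  have hσinj : Function.Injective (![2, 0, 1, 3] : Fin 4 → ℕ) := by decide
  have key : ∀ (c : Fin 4) (i : Fin s), ![(toAbsorber s l).1, (toAbsorber s l).2.1,
      (toAbsorber s l).2.2.1, (toAbsorber s l).2.2.2] c i =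
        l.getD (4 * i + (![2, 0, 1, 3] : Fin 4 → ℕ) c) 0 := by
    intro c i; fin_cases c <;> rfl
  have := hσ a
  have := hσ b
  have := i.isLt
  have := i'.isLt
  have hidx := hl.getD_inj 0 (q := 4 * i + (![2, 0, 1, 3] : Fin 4 → ℕ) a)
    (q' := 4 * i' + (![2, 0, 1, 3] : Fin 4 → ℕ) b) (by omega) (by omega)
    (by simpa only [key] using h)
  rw [Prod.mk.injEq]
  exact ⟨@hσinj a b (by omega), Fin.ext (by omega)⟩

theorem toAbsorber_mem_absorberSet (hk : 1 ≤ k)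
    (hl : l ∈ seqChoices (freshCandidates n k E R x) (8 * k)) :
    toAbsorber (2 * k) l ∈ absorberSet n E (2 * k) x R := by
  have hspec : ∀ (i : Fin (2 * k)) (r : ℕ), r < 4 → l.getD (4 * i + r) 0 ∈ Icc 1 n ∧
      l.getD (4 * i + r) 0 ∉ R ∧ l.getD (4 * i + r) 0 ≠ x := fun i r hr => by
    obtain ⟨hc, -, hR, hx⟩ := getD_spec hl (q := 4 * i + r) (by omega)
    exact ⟨candidates_subset hc, hR, hx⟩
  have hlen : 4 * (2 * k) ≤ l.length := by rw [length_of_mem_seqChoices hl]; omega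
  refine ⟨⟨injective_entries_toAbsorber (nodup_of_mem hl) hlen, fun i => ?_, fun i => ?_,
    fun _ => ?_, fun i hi => ?_⟩, fun i => ?_⟩
  · exact ⟨(hspec i 2 (by omega)).1, (hspec i 0 (by omega)).1, (hspec i 1 (by omega)).1,
      (hspec i 3 (by omega)).1⟩
  · exact ⟨(hspec i 2 (by omega)).2.2, (hspec i 0 (by omega)).2.2, (hspec i 1 (by omega)).2.2,
      (hspec i 3 (by omega)).2.2⟩
  · have h₁ := linkPair_triple_mem hl (j := 0) (r := 1) (by omega) (by omega) (by omega)
    have h₂ := linkPair_triple_mem hl (j := 0) (r := 2) (by omega) (by omega) (by omega)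
    have h₃ := linkPair_triple_mem hl (j := 0) (r := 3) (by omega) (by omega) (by omega)
    have h₄ := top_triple_mem hl hk (r := 2) le_rfl (by omega)
    have h₅ := top_triple_mem hl hk (r := 3) (by omega) (by omega)
    simp only [linkPair, vtx, Option.elim] at h₁ h₂ h₃
    rw [triple_rotate, triple_rotate] at h₂ h₄
    exact ⟨h₂, h₁, h₃, h₄, h₅⟩
  · have h₀ := linkPair_triple_mem hl (j := i + 1) (r := 0) (by omega) (by omega) (by omega)
    have h₁ := linkPair_triple_mem hl (j := i + 1) (r := 1) (by omega) (by omega) (by omega)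
    have h₂ := linkPair_triple_mem hl (j := i + 1) (r := 2) (by omega) (by omega) (by omega)
    have h₃ := linkPair_triple_mem hl (j := i + 1) (r := 3) (by omega) (by omega) (by omega)
    simp only [linkPair, vtx, Option.elim, Nat.add_zero] at h₀ h₁ h₂ h₃
    rw [triple_rotate, triple_rotate] at h₀ h₂
    exact ⟨h₁, h₃, h₂, h₀⟩
  · exact ⟨(hspec i 2 (by omega)).2.1, (hspec i 0 (by omega)).2.1, (hspec i 1 (by omega)).2.1,
      (hspec i 3 (by omega)).2.1⟩

theorem injOn_toAbsorber (s : ℕ) : Set.InjOn (toAbsorber s) {l | l.length = 4 * s} := by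
  intro l (hl : l.length = 4 * s) l' (hl' : l'.length = 4 * s) h
  simp only [toAbsorber, Prod.mk.injEq, funext_iff] at h
  obtain ⟨hv, hw, hy, hz⟩ := h
  refine List.ext_getElem (hl.trans hl'.symm) fun q hq hq' => ?_
  rw [← List.getD_eq_getElem _ 0, ← List.getD_eq_getElem _ 0]
  obtain ⟨j, r, hr, rfl⟩ : ∃ j r, r < 4 ∧ q = 4 * j + r :=
    ⟨q / 4, q % 4, Nat.mod_lt _ (by norm_num), (Nat.div_add_mod q 4).symm⟩
  have hj : j < s := by omega
  interval_cases r
  exacts [hw ⟨j, hj⟩, hy ⟨j, hj⟩, hv ⟨j, hj⟩, hz ⟨j, hj⟩]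

theorem absorberSet_finite (n : ℕ) (E : Finset (Finset ℕ)) (s x : ℕ) (R : Finset ℕ) :
    (absorberSet n E s x R).Finite := by
  let F := Fintype.piFinset fun _ : Fin s => Icc 1 n
  refine (F ×ˢ F ×ˢ F ×ˢ F).finite_toSet.subset fun p hp => ?_
  have h := hp.1.2.1
  simp only [F, coe_product, Set.mem_prod, mem_coe, Fintype.mem_piFinset]
  exact ⟨fun i => (h i).1, fun i => (h i).2.1, fun i => (h i).2.2.1, fun i => (h i).2.2.2⟩

theorem card_seqChoices_le_ncard_absorberSet (hk : 1 ≤ k) :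
    #(seqChoices (freshCandidates n k E R x) (8 * k)) ≤ (absorberSet n E (2 * k) x R).ncard := by
  have hinj : Set.InjOn (toAbsorber (2 * k)) (seqChoices (freshCandidates n k E R x) (8 * k)) :=
    (injOn_toAbsorber (2 * k)).mono fun l hl => show l.length = 4 * (2 * k) by
      rw [length_of_mem_seqChoices (mem_coe.1 hl)]; ring
  rw [← card_image_of_injOn hinj, ← Set.ncard_coe_finset]
  refine Set.ncard_le_ncard (fun p hp => ?_) (absorberSet_finite n E (2 * k) x R)
  obtain ⟨l, hl, rfl⟩ := mem_image.1 (mem_coe.1 hp)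
  exact toAbsorber_mem_absorberSet hk hl

end Absorbers

end ManyAbsorbers

open ManyAbsorbers

/-- **Many Absorbers.** Let `α = 1/k > 0` with `k ∈ ℕ`, and `s = 2/α = 2k`. There are
`ϑ > 0` and `n₀` such that for `n ≥ n₀`, any 3-graph `([n], E)` satisfying the degree
condition, any `R ⊆ [n]` with `|R| ≤ ϑ²n`, and any vertex `x ∈ [n]`, there are at
least `(αn/3)^(4s)` many `(x,α)`-absorbers with all entries in `[n] \ R`. -/
theorem stmt_7 (k : ℕ) (hk : 0 < k) (α : ℝ) (hαk : α = 1 / k) :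
    ∃ ϑ : ℝ, 0 < ϑ ∧ ∃ n₀ : ℕ, ∀ n : ℕ, n₀ ≤ n →
      ∀ E : Finset (Finset ℕ), IsThreeGraph n E → DegCond n E α →
      ∀ R : Finset ℕ, R ⊆ Finset.Icc 1 n → (R.card : ℝ) ≤ ϑ ^ 2 * n →
      ∀ x ∈ Finset.Icc 1 n,
        (α * n / 3) ^ (4 * (2 * k)) ≤
          (Set.ncard {p : (Fin (2 * k) → ℕ) × (Fin (2 * k) → ℕ) × (Fin (2 * k) → ℕ) ×
              (Fin (2 * k) → ℕ) |
            IsAbsorber n E (2 * k) x p.1 p.2.1 p.2.2.1 p.2.2.2 ∧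
            ∀ i, p.1 i ∉ R ∧ p.2.1 i ∉ R ∧ p.2.2.1 i ∉ R ∧ p.2.2.2 i ∉ R} : ℝ) := by
  subst hαk
  refine ⟨1 / (4 * k), by positivity, 120 * k ^ 2, fun n hn E hE hdeg R _ hR x hx => ?_⟩
  have hk3 : 3 ≤ k := by
    by_contra! hk2
    have : 1 / 2 ≤ 1 / (k : ℝ) :=
      one_div_le_one_div_of_le (by exact_mod_cast hk) (by exact_mod_cast (by omega : k ≤ 2))
    exact (lt_half_of_degCond hE hdeg (by nlinarith)).not_ge this
  have hR' : (R.card : ℝ) ≤ n / (16 * k ^ 2) := by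
    convert hR using 1; field_simp; ring
  have hbase : 1 / (k : ℝ) * n / 3 ≤ ⌈(n : ℝ) / (3 * k)⌉₊ := by
    have : 1 / (k : ℝ) * n / 3 = n / (3 * k) := by field_simp
    exact this ▸ Nat.le_ceil _
  calc (1 / (k : ℝ) * n / 3) ^ (4 * (2 * k))
        ≤ (⌈(n : ℝ) / (3 * k)⌉₊ : ℝ) ^ (8 * k) := by
          rw [show 4 * (2 * k) = 8 * k by ring]; gcongr
    _ ≤ (seqChoices (freshCandidates n k E R x) (8 * k)).card := by
        exact_mod_cast pow_le_card_seqChoices _ fun u hu l hl =>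
          ceil_le_card_freshCandidates hk3 hn hdeg hR' hx hu hl
    _ ≤ (absorberSet n E (2 * k) x R).ncard := by
        exact_mod_cast card_seqChoices_le_ncard_absorberSet hk
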